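/- arXiv:2104.07600 — 2 statements merged into one kernel-verified Lean document; each statement's English description precedes it below -/
import Mathlib

section
/- Under the discrete-time networked SEIR flow model with balanced flows and parameters satisfying h β_i^k, h σ_i^k, h δ_i^k ∈ (0,1] with σ_i^k ≥ σ_min > 0 and δ_i^k ≥ δ_min > 0, both the total exposed mass E^k = Σ_i e_i^k and the total infected mass X^k = Σ_i x_i^k converge to 0 as k → ∞; consequently e_i^k → 0 and x_i^k → 0 for every i ∈ [n]. -/
/-!
`S + E` loses exactly `h Σ σᵢ eᵢ ≥ h σmin E` per step and `S + E + X` loses exactly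
`h Σ δᵢ xᵢ ≥ h δmin X`. Both are nonnegative, so they converge, their decrements tend to
zero, and hence so do `E` and `X`.
-/

open Finset Filter Topology

theorem tendsto_zero_of_add_mul_le {A u : ℕ → ℝ} {c : ℝ} (hc : 0 < c)
    (hA : ∀ k, 0 ≤ A k) (hu : ∀ k, 0 ≤ u k) (hdec : ∀ k, A (k + 1) + c * u k ≤ A k) :
    Tendsto u atTop (𝓝 0) := by
  have hanti : Antitone A :=
    antitone_nat_of_succ_le fun k => by nlinarith [hdec k, hu k]
  have hlim := tendsto_atTop_ciInf hanti ⟨0, by rintro _ ⟨k, rfl⟩; exact hA k⟩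
  have hdiff : Tendsto (fun k => (A k - A (k + 1)) / c) atTop (𝓝 0) := by
    simpa using (hlim.sub (hlim.comp (tendsto_add_atTop_nat 1))).div_const c
  refine squeeze_zero hu (fun k => ?_) hdiff
  rw [le_div_iff₀ hc]
  linarith [hdec k]

theorem mul_sum_le_sum_mul {ι : Type*} (t : Finset ι) {c : ℝ} {w v : ι → ℝ}
    (hw : ∀ i ∈ t, c ≤ w i) (hv : ∀ i ∈ t, 0 ≤ v i) :
    c * ∑ i ∈ t, v i ≤ ∑ i ∈ t, w i * v i := by
  rw [mul_sum]
  exact sum_le_sum fun i hi => mul_le_mul_of_nonneg_right (hw i hi) (hv i hi)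

theorem tendsto_apply_of_tendsto_sum_zero {ι : Type*} [Fintype ι] {f : ℕ → ι → ℝ}
    (hf : ∀ k i, 0 ≤ f k i) (hsum : Tendsto (fun k => ∑ i, f k i) atTop (𝓝 0)) (i : ι) :
    Tendsto (fun k => f k i) atTop (𝓝 0) :=
  squeeze_zero (hf · i) (fun k => single_le_sum (fun j _ => hf k j) (mem_univ i)) hsum

theorem exposed_infected_vanish_general
    (n : ℕ) (h σmin δmin : ℝ) (hh : 0 < h) (hσmin : 0 < σmin) (hδmin : 0 < δmin)
    (s e x : ℕ → Fin n → ℝ) (β σ δ : ℕ → Fin n → ℝ)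
    (hs01 : ∀ k i, s k i ∈ Set.Icc (0:ℝ) 1)
    (he01 : ∀ k i, e k i ∈ Set.Icc (0:ℝ) 1)
    (hx01 : ∀ k i, x k i ∈ Set.Icc (0:ℝ) 1)
    (hσlow : ∀ k i, σmin ≤ σ k i)
    (hδlow : ∀ k i, δmin ≤ δ k i)
    (hS : ∀ k, (∑ i, s (k+1) i) = (∑ i, s k i) - h * ∑ i, β k i * x k i * s k i)
    (hE : ∀ k, (∑ i, e (k+1) i) = (∑ i, e k i)
        + h * ((∑ i, β k i * x k i * s k i) - ∑ i, σ k i * e k i))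
    (hX : ∀ k, (∑ i, x (k+1) i) = (∑ i, x k i)
        + h * ((∑ i, σ k i * e k i) - ∑ i, δ k i * x k i)) :
    Tendsto (fun k => ∑ i, e k i) atTop (nhds 0) ∧
    Tendsto (fun k => ∑ i, x k i) atTop (nhds 0) ∧
    (∀ i, Tendsto (fun k => e k i) atTop (nhds 0)) ∧
    (∀ i, Tendsto (fun k => x k i) atTop (nhds 0)) := by
  have hs0 k : 0 ≤ ∑ i, s k i := sum_nonneg fun i _ => (hs01 k i).1
  have he0 k : 0 ≤ ∑ i, e k i := sum_nonneg fun i _ => (he01 k i).1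
  have hx0 k : 0 ≤ ∑ i, x k i := sum_nonneg fun i _ => (hx01 k i).1
  have hEsum : Tendsto (fun k => ∑ i, e k i) atTop (𝓝 0) := by
    refine tendsto_zero_of_add_mul_le (A := fun k => (∑ i, s k i) + ∑ i, e k i)
      (mul_pos hh hσmin) (fun k => add_nonneg (hs0 k) (he0 k)) he0 fun k => ?_
    have hloss := mul_le_mul_of_nonneg_left
      (mul_sum_le_sum_mul univ (fun i _ => hσlow k i) fun i _ => (he01 k i).1) hh.le
    simp only [hS k, hE k]
    linarith
  have hXsum : Tendsto (fun k => ∑ i, x k i) atTop (𝓝 0) := by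
    refine tendsto_zero_of_add_mul_le
      (A := fun k => (∑ i, s k i) + (∑ i, e k i) + ∑ i, x k i) (mul_pos hh hδmin)
      (fun k => add_nonneg (add_nonneg (hs0 k) (he0 k)) (hx0 k)) hx0 fun k => ?_
    have hloss := mul_le_mul_of_nonneg_left
      (mul_sum_le_sum_mul univ (fun i _ => hδlow k i) fun i _ => (hx01 k i).1) hh.le
    simp only [hS k, hE k, hX k]
    linarith
  exact ⟨hEsum, hXsum, tendsto_apply_of_tendsto_sum_zero (fun k i => (he01 k i).1) hEsum,
    tendsto_apply_of_tendsto_sum_zero (fun k i => (hx01 k i).1) hXsum⟩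

/-- under the aggregated balanced-flow SEIR dynamics the total exposed
and infected masses tend to zero, hence so does every coordinate. -/
theorem exposed_infected_vanish
    (n : ℕ) (h σmin δmin : ℝ) (hh : 0 < h) (hσmin : 0 < σmin) (hδmin : 0 < δmin)
    (s e x : ℕ → Fin n → ℝ) (β σ δ : ℕ → Fin n → ℝ)
    (hs01 : ∀ k i, s k i ∈ Set.Icc (0:ℝ) 1)
    (he01 : ∀ k i, e k i ∈ Set.Icc (0:ℝ) 1)
    (hx01 : ∀ k i, x k i ∈ Set.Icc (0:ℝ) 1)
    (hβ : ∀ k i, 0 < h * β k i ∧ h * β k i ≤ 1)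
    (hσ : ∀ k i, 0 < h * σ k i ∧ h * σ k i ≤ 1)
    (hδ : ∀ k i, 0 < h * δ k i ∧ h * δ k i ≤ 1)
    (hσlow : ∀ k i, σmin ≤ σ k i)
    (hδlow : ∀ k i, δmin ≤ δ k i)
    (hS : ∀ k, (∑ i, s (k+1) i) = (∑ i, s k i) - h * ∑ i, β k i * x k i * s k i)
    (hE : ∀ k, (∑ i, e (k+1) i) = (∑ i, e k i)
        + h * ((∑ i, β k i * x k i * s k i) - ∑ i, σ k i * e k i))
    (hX : ∀ k, (∑ i, x (k+1) i) = (∑ i, x k i)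
        + h * ((∑ i, σ k i * e k i) - ∑ i, δ k i * x k i)) :
    Tendsto (fun k => ∑ i, e k i) atTop (nhds 0) ∧
    Tendsto (fun k => ∑ i, x k i) atTop (nhds 0) ∧
    (∀ i, Tendsto (fun k => e k i) atTop (nhds 0)) ∧
    (∀ i, Tendsto (fun k => x k i) atTop (nhds 0)) :=
  exposed_infected_vanish_general n h σmin δmin hh hσmin hδmin s e x β σ δ hs01 he01 hx01 hσlow
    hδlow hS hE hX
end

section
/- Consider the time-varying linear consensus system s^{k+1} = L^k s^k where each L^k is row-stochastic, has diagonal entries bounded below by a uniform positive constant y, has every nonzero off-diagonal entry bounded below by y, and the union graph over every window of K consecutive steps is strongly connected. Then all components of s^k converge to a common limit α, i.e., lim_{k→∞} s_i^k = α for all i. -/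
/-!
Row-stochastic matrices with positive diagonal never lose a positive entry when multiplied
together, and a window of `K` steps whose union graph is strongly connected adds at least one
node to the set of nodes having a positive entry in a given column of the transition matrix.
So after `N = (n - 1) K + 1` steps every entry of the transition matrix is positive, hence at
least `y ^ N`. A row-stochastic matrix never increases `max s` or decreases `min s`, and one whose
entries are all at least `δ` multiplies the spread `max s - min s` by at most `1 - 2 δ`. The
maximum and minimum of `s k` are therefore monotone with a geometrically vanishing gap, and their
common limit squeezes every component.
-/

open Filter Matrix Finset Topology

theorem Relation.ReflTransGen.exists_rel_notMem_mem {α : Type*} {r : α → α → Prop}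
    {s : Set α} {a b : α} (h : ReflTransGen r a b) (ha : a ∉ s) (hb : b ∈ s) :
    ∃ x y, x ∉ s ∧ y ∈ s ∧ r x y := by
  induction h using Relation.ReflTransGen.head_induction_on with
  | refl => exact absurd hb ha
  | @head x z hxz _ ih =>
    by_cases hz : z ∈ s
    · exact ⟨x, z, ha, hz, hxz⟩
    · exact ih hz

theorem Finset.eq_univ_of_ssubset_succ {α : Type*} [Fintype α] {S : ℕ → Finset α}
    (h0 : (S 0).Nonempty) (hmono : ∀ t, S t ⊆ S (t + 1))
    (hstep : ∀ t, S t ≠ univ → S t ⊂ S (t + 1)) : S (Fintype.card α - 1) = univ := by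
  have hcard : ∀ t, min (Fintype.card α) (t + 1) ≤ #(S t) := by
    intro t
    induction t with
    | zero => exact (min_le_right _ _).trans h0.card_pos
    | succ t ih =>
      by_cases hfull : S t = univ
      · have := card_le_card (hmono t)
        rw [hfull, card_univ] at this
        exact (min_le_left _ _).trans this
      · have := card_lt_card (hstep t hfull)
        omega
  apply eq_univ_of_card
  have := hcard (Fintype.card α - 1)
  have := card_le_univ (S (Fintype.card α - 1))
  omega

theorem tendsto_zero_of_le_mul_of_antitone {σ : ℕ → ℝ} (hσ : Antitone σ)
    (h0 : ∀ k, 0 ≤ σ k) {N : ℕ} (hN : 0 < N) {c : ℝ} (hc : c < 1)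
    (hcontr : ∀ a, σ (a + N) ≤ c * σ a) :
    Tendsto σ atTop (𝓝 0) := by
  -- `c` may be negative, and the geometric bound needs a nonnegative ratio.
  set c' := max c 0
  have hgeom : ∀ t, σ (t * N) ≤ c' ^ t * σ 0 := by
    intro t
    induction t with
    | zero => simp
    | succ t ih =>
      calc σ ((t + 1) * N) = σ (t * N + N) := by rw [add_mul, one_mul]
        _ ≤ c' * σ (t * N) :=
          (hcontr _).trans (mul_le_mul_of_nonneg_right (le_max_left _ _) (h0 _))
        _ ≤ c' * (c' ^ t * σ 0) := mul_le_mul_of_nonneg_left ih (le_max_right _ _)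
        _ = c' ^ (t + 1) * σ 0 := by ring
  refine squeeze_zero h0 (fun k => (hσ (Nat.div_mul_le_self k N)).trans (hgeom (k / N))) ?_
  simpa using ((tendsto_pow_atTop_nhds_zero_of_lt_one (le_max_right _ _)
    (max_lt hc one_pos)).comp (Nat.tendsto_div_const_atTop hN.ne')).mul_const (σ 0)

theorem exists_tendsto_of_antitone_of_monotone {M m : ℕ → ℝ} (hM : Antitone M)
    (hm : Monotone m) (hle : ∀ k, m k ≤ M k) (h : Tendsto (M - m) atTop (𝓝 0)) :
    ∃ α, Tendsto M atTop (𝓝 α) ∧ Tendsto m atTop (𝓝 α) := by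
  have hMlim := tendsto_atTop_ciInf hM ⟨m 0, by
    rintro _ ⟨k, rfl⟩
    exact (hm k.zero_le).trans (hle k)⟩
  exact ⟨_, hMlim, by simpa using hMlim.sub h⟩

namespace Matrix

variable {l m n R : Type*} [Fintype m]

theorem mul_apply_ge_of_nonneg [Semiring R] [PartialOrder R] [IsOrderedRing R]
    {A : Matrix l m R} {B : Matrix m n R} (hA : ∀ i j, 0 ≤ A i j) (hB : ∀ i j, 0 ≤ B i j)
    (i : l) (k : m) (j : n) : A i k * B k j ≤ (A * B) i j :=
  single_le_sum (f := fun k => A i k * B k j) (fun _ _ => mul_nonneg (hA _ _) (hB _ _))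
    (mem_univ k)

theorem mul_apply_pos_of_nonneg [Semiring R] [PartialOrder R] [IsStrictOrderedRing R]
    {A : Matrix l m R} {B : Matrix m n R} (hA : ∀ i j, 0 ≤ A i j) (hB : ∀ i j, 0 ≤ B i j)
    {i : l} {k : m} {j : n} (hik : 0 < A i k) (hkj : 0 < B k j) : 0 < (A * B) i j :=
  (mul_pos hik hkj).trans_le (mul_apply_ge_of_nonneg hA hB i k j)

variable [DecidableEq m] [CommRing R] [LinearOrder R] [IsStrictOrderedRing R]
  {A : Matrix m m R}

theorem mulVec_apply_le_of_mem_rowStochastic (hA : A ∈ rowStochastic R m) {δ M : R} {i : m}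
    (hδ : ∀ j, δ ≤ A i j) {v : m → R} (hv : ∀ j, v j ≤ M) (j₀ : m) :
    (A *ᵥ v) i ≤ M - δ * (M - v j₀) := by
  have hsum : ∑ j, A i j * (M - v j) = M - (A *ᵥ v) i := by
    simp only [mul_sub, sum_sub_distrib, ← sum_mul, sum_row_of_mem_rowStochastic hA, one_mul,
      mulVec, dotProduct]
  have hj₀ : A i j₀ * (M - v j₀) ≤ ∑ j, A i j * (M - v j) :=
    single_le_sum (f := fun j => A i j * (M - v j))
      (fun j _ => mul_nonneg (nonneg_of_mem_rowStochastic hA) (sub_nonneg.2 (hv j)))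
      (mem_univ j₀)
  nlinarith [mul_le_mul_of_nonneg_right (hδ j₀) (sub_nonneg.2 (hv j₀))]

variable [Nonempty m]

theorem sup'_mulVec_le_of_mem_rowStochastic (hA : A ∈ rowStochastic R m) {δ : R}
    (hδ : ∀ i j, δ ≤ A i j) (v : m → R) :
    univ.sup' univ_nonempty (A *ᵥ v) ≤ univ.sup' univ_nonempty v -
      δ * (univ.sup' univ_nonempty v - univ.inf' univ_nonempty v) := by
  obtain ⟨j₀, -, hj₀⟩ := exists_mem_eq_inf' univ_nonempty v
  rw [hj₀]
  exact sup'_le _ _ fun i _ =>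
    mulVec_apply_le_of_mem_rowStochastic hA (hδ i) (fun j => le_sup' v (mem_univ j)) j₀

theorem inf'_le_inf'_mulVec_of_mem_rowStochastic (hA : A ∈ rowStochastic R m) {δ : R}
    (hδ : ∀ i j, δ ≤ A i j) (v : m → R) :
    univ.inf' univ_nonempty v +
      δ * (univ.sup' univ_nonempty v - univ.inf' univ_nonempty v) ≤
      univ.inf' univ_nonempty (A *ᵥ v) := by
  obtain ⟨j₁, -, hj₁⟩ := exists_mem_eq_sup' univ_nonempty v
  rw [hj₁]
  refine le_inf' _ _ fun i _ => ?_
  have := mulVec_apply_le_of_mem_rowStochastic hA (hδ i) (v := -v)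
    (M := -univ.inf' univ_nonempty v) (fun j => neg_le_neg (inf'_le v (mem_univ j))) j₁
  rw [mulVec_neg, Pi.neg_apply, Pi.neg_apply] at this
  linarith

end Matrix

namespace Consensus

variable {ι R : Type*} [Fintype ι] [DecidableEq ι]

/-- `transition L a t = L (a + t - 1) * ⋯ * L a` maps the state at time `a` to the state at
time `a + t`. -/
def transition [Semiring R] (L : ℕ → Matrix ι ι R) (a : ℕ) : ℕ → Matrix ι ι R
  | 0 => 1
  | t + 1 => L (a + t) * transition L a t

section Semiring

variable [Semiring R] {L : ℕ → Matrix ι ι R}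

theorem transition_add (a t u : ℕ) :
    transition L a (t + u) = transition L (a + t) u * transition L a t := by
  induction u with
  | zero => simp [transition]
  | succ u ih => rw [← add_assoc, transition, ih, transition, Matrix.mul_assoc, add_assoc]

theorem mulVec_transition {s : ℕ → ι → R} (hs : ∀ k, s (k + 1) = L k *ᵥ s k)
    (a t : ℕ) : s (a + t) = transition L a t *ᵥ s a := by
  induction t with
  | zero => simp [transition]
  | succ t ih => rw [← add_assoc, hs, ih, mulVec_mulVec, transition]

end Semiring

section Positivity

variable [Semiring R] [LinearOrder R] [IsStrictOrderedRing R] {L : ℕ → Matrix ι ι R}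
  (hL : ∀ k, L k ∈ rowStochastic R ι)
include hL

theorem transition_mem_rowStochastic (a t : ℕ) : transition L a t ∈ rowStochastic R ι := by
  induction t with
  | zero => exact one_mem _
  | succ t ih => exact mul_mem (hL _) ih

theorem pow_le_transition_apply {y : R} (hy : 0 ≤ y)
    (hlb : ∀ k i j, 0 < L k i j → y ≤ L k i j) {a t : ℕ} {i j : ι}
    (h : 0 < transition L a t i j) : y ^ t ≤ transition L a t i j := by
  induction t generalizing i with
  | zero =>
    obtain rfl : i = j := by by_contra hij; simp [transition, one_apply_ne hij] at h
    simp [transition]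
  | succ t ih =>
    have hΦ := transition_mem_rowStochastic hL a t
    obtain ⟨k, -, hk⟩ := exists_lt_of_sum_lt (s := univ) (f := fun _ => (0 : R))
      (by simpa [transition, mul_apply] using h)
    have hLik : 0 < L (a + t) i k :=
      (nonneg_of_mem_rowStochastic (hL _)).lt_of_ne fun h0 => by simp [← h0] at hk
    have hΦkj : 0 < transition L a t k j :=
      (nonneg_of_mem_rowStochastic hΦ).lt_of_ne fun h0 => by simp [← h0] at hk
    calc y ^ (t + 1) = y * y ^ t := pow_succ' y t
      _ ≤ L (a + t) i k * transition L a t k j :=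
        mul_le_mul (hlb _ _ _ hLik) (ih hΦkj) (pow_nonneg hy t) hLik.le
      _ ≤ (L (a + t) * transition L a t) i j :=
        mul_apply_ge_of_nonneg (mem_rowStochastic.1 (hL _)).1 (mem_rowStochastic.1 hΦ).1 i k j

theorem transition_mul_apply_pos {a t u : ℕ} {i k j : ι}
    (hik : 0 < transition L (a + t) u i k) (hkj : 0 < transition L a t k j) :
    0 < transition L a (t + u) i j := by
  rw [transition_add]
  exact mul_apply_pos_of_nonneg
    (mem_rowStochastic.1 (transition_mem_rowStochastic hL _ _)).1
    (mem_rowStochastic.1 (transition_mem_rowStochastic hL _ _)).1 hik hkj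

variable (hdiag : ∀ k i, 0 < L k i i)
include hdiag

theorem transition_apply_self_pos (a t : ℕ) (i : ι) : 0 < transition L a t i i := by
  induction t with
  | zero => simp [transition]
  | succ t ih =>
    exact mul_apply_pos_of_nonneg (mem_rowStochastic.1 (hL _)).1
      (mem_rowStochastic.1 (transition_mem_rowStochastic hL a t)).1 (hdiag _ i) ih

theorem transition_apply_pos_of_le {a t u : ℕ} (htu : t ≤ u) {i j : ι}
    (h : 0 < transition L a t i j) : 0 < transition L a u i j := by
  obtain ⟨r, rfl⟩ := Nat.exists_eq_add_of_le htu
  exact transition_mul_apply_pos hL (transition_apply_self_pos hL hdiag _ _ i) h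

theorem transition_apply_pos_of_pos {a m t : ℕ} (ham : a ≤ m) (hmt : m < a + t) {i j : ι}
    (h : 0 < L m i j) : 0 < transition L a t i j := by
  obtain ⟨d, rfl⟩ := Nat.exists_eq_add_of_le ham
  have hstep : 0 < transition L a (d + 1) i j :=
    transition_mul_apply_pos hL (by simpa [transition] using h)
      (transition_apply_self_pos hL hdiag a d j)
  exact transition_apply_pos_of_le hL hdiag (by omega) hstep

theorem transition_apply_pos_of_connected {K : ℕ}
    (hconn : ∀ k i j,
      Relation.ReflTransGen (fun p q => ∃ m, k ≤ m ∧ m < k + K ∧ 0 < L m p q) i j)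
    (a : ℕ) (i j : ι) : 0 < transition L a ((Fintype.card ι - 1) * K) i j := by
  -- `S t` gains a node in each window of `K` steps: the path from a node outside `S t` to `j`
  -- has an edge entering `S t`.
  set S : ℕ → Finset ι := fun t => univ.filter fun i => 0 < transition L a (t * K) i j
  have hmono : ∀ t, S t ⊆ S (t + 1) := fun t p hp => by
    simp only [S, mem_filter, mem_univ, true_and] at hp ⊢
    exact transition_apply_pos_of_le hL hdiag (Nat.mul_le_mul_right K t.le_succ) hp
  have hstep : ∀ t, S t ≠ univ → S t ⊂ S (t + 1) := by
    intro t hfull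
    obtain ⟨i₀, hi₀⟩ := not_forall.1 fun h => hfull (eq_univ_of_forall h)
    have hj : j ∈ S t := by simpa [S] using transition_apply_self_pos hL hdiag a (t * K) j
    obtain ⟨p, q, hp, hq, m, hm, hm', hpq⟩ :=
      (hconn (a + t * K) i₀ j).exists_rel_notMem_mem (s := ↑(S t)) hi₀ hj
    refine (ssubset_iff_of_subset (hmono t)).2 ⟨p, ?_, hp⟩
    simp only [S, mem_coe, mem_filter, mem_univ, true_and, add_mul, one_mul] at hq ⊢
    exact transition_mul_apply_pos hL (transition_apply_pos_of_pos hL hdiag hm hm' hpq) hq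
  have hj : j ∈ S 0 := by simpa [S] using transition_apply_self_pos hL hdiag a 0 j
  have hi : i ∈ S (Fintype.card ι - 1) :=
    eq_univ_of_ssubset_succ ⟨j, hj⟩ hmono hstep ▸ mem_univ i
  simpa [S] using hi

end Positivity

theorem exists_tendsto_of_le_transition_apply [Nonempty ι] {L : ℕ → Matrix ι ι ℝ}
    (hL : ∀ k, L k ∈ rowStochastic ℝ ι) {s : ℕ → ι → ℝ}
    (hs : ∀ k, s (k + 1) = L k *ᵥ s k) {N : ℕ} (hN : 0 < N) {δ : ℝ} (hδ : 0 < δ)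
    (hΦ : ∀ a i j, δ ≤ transition L a N i j) :
    ∃ α, ∀ i, Tendsto (fun k => s k i) atTop (𝓝 α) := by
  set M : ℕ → ℝ := fun k => univ.sup' univ_nonempty (s k)
  set m : ℕ → ℝ := fun k => univ.inf' univ_nonempty (s k)
  have hM : Antitone M := antitone_nat_of_succ_le fun k => by
    simpa [M, hs] using sup'_mulVec_le_of_mem_rowStochastic (hL k)
      (fun _ _ => nonneg_of_mem_rowStochastic (hL k)) (s k)
  have hm : Monotone m := monotone_nat_of_le_succ fun k => by
    simpa [m, hs] using inf'_le_inf'_mulVec_of_mem_rowStochastic (hL k)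
      (fun _ _ => nonneg_of_mem_rowStochastic (hL k)) (s k)
  have hcontr : ∀ a, (M - m) (a + N) ≤ (1 - 2 * δ) * (M - m) a := fun a => by
    have hsup := sup'_mulVec_le_of_mem_rowStochastic
      (transition_mem_rowStochastic hL a N) (hΦ a) (s a)
    have hinf := inf'_le_inf'_mulVec_of_mem_rowStochastic
      (transition_mem_rowStochastic hL a N) (hΦ a) (s a)
    rw [← mulVec_transition hs] at hsup hinf
    simp only [Pi.sub_apply, M, m]
    linarith
  have hle : ∀ k, m k ≤ M k := fun k =>
    (inf'_le _ (mem_univ (Classical.arbitrary ι))).trans (le_sup' _ (mem_univ _))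
  have hspread := tendsto_zero_of_le_mul_of_antitone
    (fun a b hab => sub_le_sub (hM hab) (hm hab)) (fun k => sub_nonneg.2 (hle k)) hN
    (by linarith) hcontr
  obtain ⟨α, hMα, hmα⟩ := exists_tendsto_of_antitone_of_monotone hM hm hle hspread
  exact ⟨α, fun i => tendsto_of_tendsto_of_tendsto_of_le_of_le hmα hMα
    (fun k => inf'_le _ (mem_univ i)) (fun k => le_sup' _ (mem_univ i))⟩

end Consensus

open Consensus

theorem time_varying_consensus_general
    (n K : ℕ) (y : ℝ) (hy : 0 < y)
    (L : ℕ → Matrix (Fin n) (Fin n) ℝ)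
    (hdiag : ∀ k i, y ≤ L k i i)
    (hentries : ∀ k i j, L k i j = 0 ∨ (y ≤ L k i j ∧ L k i j ≤ 1))
    (hrow : ∀ k i, ∑ j, L k i j = 1)
    -- K-strong connectivity of the union graphs
    (hconn : ∀ k : ℕ, ∀ i j : Fin n,
      Relation.ReflTransGen
        (fun a b : Fin n => a ≠ b ∧ ∃ m, k ≤ m ∧ m < k + K ∧ 0 < L m a b) i j)
    (s : ℕ → Fin n → ℝ)
    (hdyn : ∀ k, s (k+1) = (L k).mulVec (s k)) :
    ∃ α : ℝ, ∀ i, Tendsto (fun k => s k i) atTop (nhds α) := by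
  cases isEmpty_or_nonempty (Fin n)
  · exact ⟨0, isEmptyElim⟩
  have hL : ∀ k, L k ∈ rowStochastic ℝ (Fin n) := fun k => mem_rowStochastic_iff_sum.2
    ⟨fun i j => (hentries k i j).elim (·.ge) fun h => hy.le.trans h.1, hrow k⟩
  have hlb : ∀ k i j, 0 < L k i j → y ≤ L k i j := fun k i j h =>
    ((hentries k i j).resolve_left h.ne').1
  have hdiag_pos : ∀ k i, 0 < L k i i := fun k i => hy.trans_le (hdiag k i)
  have hpos : ∀ a i j, 0 < transition L a ((n - 1) * K) i j := by
    simpa using transition_apply_pos_of_connected hL hdiag_pos fun k i j =>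
      Relation.ReflTransGen.mono (fun _ _ h => h.2) _ _ (hconn k i j)
  exact exists_tendsto_of_le_transition_apply hL hdyn (Nat.succ_pos ((n - 1) * K))
    (pow_pos hy _) fun a i j => pow_le_transition_apply hL hy.le hlb
      (transition_apply_pos_of_le hL hdiag_pos (Nat.le_succ _) (hpos a i j))

/-- discrete-time consensus for time-varying row-stochastic matrices
with uniformly positive entries and K-strongly-connected union graphs. -/
theorem time_varying_consensus
    (n K : ℕ) (hK : 0 < K) (y : ℝ) (hy : 0 < y)
    (L : ℕ → Matrix (Fin n) (Fin n) ℝ)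
    (hdiag : ∀ k i, y ≤ L k i i)
    (hentries : ∀ k i j, L k i j = 0 ∨ (y ≤ L k i j ∧ L k i j ≤ 1))
    (hrow : ∀ k i, ∑ j, L k i j = 1)
    -- K-strong connectivity of the union graphs
    (hconn : ∀ k : ℕ, ∀ i j : Fin n,
      Relation.ReflTransGen
        (fun a b : Fin n => a ≠ b ∧ ∃ m, k ≤ m ∧ m < k + K ∧ 0 < L m a b) i j)
    (s : ℕ → Fin n → ℝ)
    (hdyn : ∀ k, s (k+1) = (L k).mulVec (s k)) :
    ∃ α : ℝ, ∀ i, Tendsto (fun k => s k i) atTop (nhds α) :=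
  time_varying_consensus_general n K y hy L hdiag hentries hrow hconn s hdyn
end
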